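/- Let G and H be groups and let φ : G → H be a surjective group homomorphism whose kernel is contained in the center of G (i.e., G is a central extension of H). If H is super-solvable, then the commutator subgroup [G, G] is super-solvable. -/

import Mathlib

/-- A group `K` is *super-solvable* if there is a finite chain of subgroups
`1 = K₀ ≤ K₁ ≤ ⋯ ≤ Kₙ = K` such that each `Kᵢ` is normal in `K` and each quotient
`K_{i+1}/Kᵢ` is cyclic (i.e. `K_{i+1}` is generated over `Kᵢ` by a single element). -/
def IsSupersolvable (G : Type*) [Group G] : Prop :=
  ∃ (n : ℕ) (K : Fin (n + 1) → Subgroup G),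
    Monotone K ∧ K 0 = ⊥ ∧ K (Fin.last n) = ⊤ ∧
    (∀ i, (K i).Normal) ∧
    ∀ i : Fin n, ∃ g ∈ K i.succ, K i.succ ≤ K i.castSucc ⊔ Subgroup.zpowers g

/-!
Restricting `φ` gives `ψ : [G, G] → H` with kernel `ker φ ⊓ [G, G]`, and pulling back a
supersolvable series of `H` along `ψ` gives a normal series of `[G, G]` with cyclic factors from
`ker ψ` up to `[G, G]`. As `ker φ` is central, all its subgroups are normal, so once
`ker φ ⊓ [G, G]` is finitely generated, adjoining its generators one at a time completes the
series down to `1`.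

Finite generation of `ker φ ⊓ ⁅Pᵢ, Pᵢ⁆`, where `Pᵢ = φ⁻¹ Bᵢ` for the series `Bᵢ` of `H`, is proved
by induction on `i`. If `Bᵢ₊₁ ≤ Bᵢ ⊔ ⟨φ x⟩`, then `Pᵢ₊₁ ≤ Pᵢ ⊔ ⟨x⟩`, and modulo `⁅Pᵢ, Pᵢ⁆` every
commutator of `Pᵢ₊₁` lies in the image of the homomorphism `a ↦ ⁅x, a⁆` on `Pᵢ`. That map kills
the central subgroup `ker φ`, so it factors through `Bᵢ`, all of whose subgroups are finitely
generated. Hence `ker φ ⊓ ⁅Pᵢ₊₁, Pᵢ₊₁⁆` has finitely generated image modulo `⁅Pᵢ, Pᵢ⁆`, and its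
intersection with `⁅Pᵢ, Pᵢ⁆` is `ker φ ⊓ ⁅Pᵢ, Pᵢ⁆`.
-/

section

open scoped commutatorElement

variable {G H : Type*} [Group G] [Group H]

namespace Subgroup

theorem FG.map {P : Subgroup G} (hP : P.FG) (f : G →* H) : (P.map f).FG := by
  rw [← Group.fg_iff_subgroup_fg] at hP ⊢
  exact Group.fg_of_surjective (f.subgroupMap_surjective P)

theorem FG.of_le_range {f : G →* H} (hG : ∀ S : Subgroup G, S.FG) {T : Subgroup H}
    (hT : T ≤ f.range) : T.FG :=
  map_comap_eq_self hT ▸ (hG _).map f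

theorem fg_of_isCyclic {P : Subgroup G} (hP : IsCyclic P) : P.FG := by
  obtain ⟨g, rfl⟩ := (P.isCyclic_iff_exists_zpowers_eq_top).1 hP
  exact (fg_iff _).2 ⟨{g}, (zpowers_eq_closure g).symm, Set.finite_singleton g⟩

theorem fg_of_fg_map_of_fg_inf_ker (f : G →* H) {A : Subgroup G} (hmap : (A.map f).FG)
    (hker : (A ⊓ f.ker).FG) : A.FG := by
  obtain ⟨T, hT, hTfin⟩ := (fg_iff _).1 hmap
  obtain ⟨S, hSsub, hSfin, hS⟩ :=
    Set.exists_subset_image_finite_and (p := fun T => closure T = A.map f) |>.1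
      ⟨T, hT ▸ subset_closure, hTfin, hT⟩
  have hSA : closure S ≤ A := (closure_le _).2 hSsub
  have hAS : A ≤ A ⊓ f.ker ⊔ closure S := by
    intro a ha
    obtain ⟨w, hw, hfw⟩ : f a ∈ (closure S).map f := by
      rw [MonoidHom.map_closure, hS]
      exact mem_map_of_mem f ha
    have hwa : w⁻¹ * a ∈ A ⊓ f.ker := ⟨A.mul_mem (A.inv_mem (hSA hw)) ha, by simp [hfw]⟩
    simpa using mul_mem (mem_sup_right hw) (mem_sup_left hwa)
  rw [le_antisymm hAS (sup_le inf_le_left hSA)]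
  exact hker.sup ((fg_iff _).2 ⟨S, rfl, hSfin⟩)

theorem exists_le_sup_zpowers_iff_isCyclic_map {A B : Subgroup G} (f : G →* H)
    (hf : f.ker = A) : (∃ g ∈ B, B ≤ A ⊔ zpowers g) ↔ IsCyclic (B.map f) := by
  constructor
  · rintro ⟨g, -, hB⟩
    have : B.map f ≤ zpowers (f g) :=
      calc B.map f ≤ (A ⊔ zpowers g).map f := map_mono hB
        _ = zpowers (f g) := by
          rw [map_sup, ← hf, map_ker_self, bot_sup_eq, MonoidHom.map_zpowers]
    exact isCyclic_of_le this
  · intro h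
    obtain ⟨y, hy⟩ := ((B.map f).isCyclic_iff_exists_zpowers_eq_top).1 h
    obtain ⟨g, hg, rfl⟩ : y ∈ B.map f := hy ▸ mem_zpowers y
    refine ⟨g, hg, ?_⟩
    calc B ≤ (B.map f).comap f := le_comap_map f B
      _ = A ⊔ zpowers g := by rw [← hy, ← MonoidHom.map_zpowers, comap_map_eq, hf, sup_comm]

theorem exists_comap_le_comap_sup_zpowers (ψ : G →* H) {A B : Subgroup H} [A.Normal]
    (h : ∃ g ∈ B, B ≤ A ⊔ zpowers g) :
    ∃ d ∈ B.comap ψ, B.comap ψ ≤ A.comap ψ ⊔ zpowers d := by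
  rw [exists_le_sup_zpowers_iff_isCyclic_map _ (QuotientGroup.ker_mk' A)] at h
  rw [exists_le_sup_zpowers_iff_isCyclic_map ((QuotientGroup.mk' A).comp ψ)
    (by rw [← MonoidHom.comap_ker, QuotientGroup.ker_mk']), ← map_map]
  exact isCyclic_of_le (map_mono (map_comap_le ψ B))

theorem normal_of_le_center {P : Subgroup G} (h : P ≤ center G) : P.Normal :=
  ⟨fun n hn g => by simpa [mem_center_iff.1 (h hn) g] using hn⟩

theorem Normal.commutatorElement_mem {P : Subgroup G} (hP : P.Normal) (x : G) {a : G}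
    (ha : a ∈ P) : ⁅x, a⁆ ∈ P :=
  commutator_le_right ⊤ P (commutator_mem_commutator (mem_top x) ha)

end Subgroup

open Subgroup

/-- `CyclicNormalSeries A B`: there is a chain `A = K₀ ≤ ⋯ ≤ Kₙ = B` of normal subgroups of `G`
with `K_{i+1} ≤ Kᵢ ⊔ ⟨gᵢ⟩` for some `gᵢ ∈ K_{i+1}`. -/
inductive CyclicNormalSeries (A : Subgroup G) : Subgroup G → Prop
  | refl : A.Normal → CyclicNormalSeries A A
  | snoc {B C : Subgroup G} : CyclicNormalSeries A B → C.Normal → B ≤ C →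
      (∃ g ∈ C, C ≤ B ⊔ zpowers g) → CyclicNormalSeries A C

namespace CyclicNormalSeries

variable {A B C : Subgroup G}

theorem normal (h : CyclicNormalSeries A B) : B.Normal := by
  cases h with
  | refl hA => exact hA
  | snoc _ hC _ _ => exact hC

theorem trans (hAB : CyclicNormalSeries A B) (hBC : CyclicNormalSeries B C) :
    CyclicNormalSeries A C := by
  induction hBC with
  | refl _ => exact hAB
  | snoc _ hC hle hcyc ih => exact snoc ih hC hle hcyc

theorem comap (ψ : H →* G) (h : CyclicNormalSeries A B) :
    CyclicNormalSeries (A.comap ψ) (B.comap ψ) := by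
  induction h with
  | refl hA => exact refl (hA.comap ψ)
  | snoc hAB hC hle hcyc ih =>
    have := hAB.normal
    exact snoc ih (hC.comap ψ) (comap_mono hle) (exists_comap_le_comap_sup_zpowers ψ hcyc)

theorem fg_of_le (h : CyclicNormalSeries ⊥ B) {Q : Subgroup G} (hQ : Q ≤ B) : Q.FG := by
  induction h generalizing Q with
  | refl _ => exact le_bot_iff.1 hQ ▸ FG.bot
  | @snoc B C hB _ _ hcyc ih =>
    have := hB.normal
    refine fg_of_fg_map_of_fg_inf_ker (QuotientGroup.mk' B) ?_ ?_
    · rw [exists_le_sup_zpowers_iff_isCyclic_map _ (QuotientGroup.ker_mk' B)] at hcyc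
      exact fg_of_isCyclic (isCyclic_of_le (map_mono hQ))
    · rw [QuotientGroup.ker_mk']
      exact ih inf_le_right

theorem fg (h : CyclicNormalSeries ⊥ B) (S : Subgroup B) : S.FG := by
  have := h.comap B.subtype
  rw [MonoidHom.comap_bot, ker_subtype, ← subgroupOf, subgroupOf_self] at this
  exact this.fg_of_le le_top

theorem exists_chain (h : CyclicNormalSeries A B) :
    ∃ (n : ℕ) (K : Fin (n + 1) → Subgroup G),
      Monotone K ∧ K 0 = A ∧ K (Fin.last n) = B ∧ (∀ i, (K i).Normal) ∧
      ∀ i : Fin n, ∃ g ∈ K i.succ, K i.succ ≤ K i.castSucc ⊔ zpowers g := by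
  induction h with
  | refl hA => exact ⟨0, fun _ => A, monotone_const, rfl, rfl, fun _ => hA, Fin.elim0⟩
  | @snoc B C _ hC hle hcyc ih =>
    obtain ⟨n, K, hmono, h0, hlast, hnorm, hK⟩ := ih
    refine ⟨n + 1, Fin.snoc K C, Fin.monotone_iff_le_succ.2 fun i => ?_, by simpa using h0,
      Fin.snoc_last _ _, Fin.lastCases (by simpa using hC) (fun i => by simpa using hnorm i),
      Fin.lastCases ?_ fun i => ?_⟩
    · induction i using Fin.lastCases with
      | last => simpa [hlast] using hle
      | cast i =>
        rw [Fin.succ_castSucc]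
        simpa only [Fin.snoc_castSucc] using hmono i.castSucc_le_succ
    · simpa [hlast] using hcyc
    · rw [Fin.succ_castSucc]
      simpa only [Fin.snoc_castSucc] using hK i

end CyclicNormalSeries

theorem isSupersolvable_iff_cyclicNormalSeries :
    IsSupersolvable G ↔ CyclicNormalSeries (⊥ : Subgroup G) ⊤ := by
  refine ⟨fun ⟨n, K, hmono, h0, hlast, hnorm, hK⟩ => ?_, CyclicNormalSeries.exists_chain⟩
  have : ∀ i, CyclicNormalSeries ⊥ (K i) := by
    intro i
    induction i using Fin.induction with
    | zero => rw [h0]; exact .refl normal_bot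
    | succ i ih => exact ih.snoc (hnorm _) (hmono i.castSucc_le_succ) (hK i)
  exact hlast ▸ this (Fin.last n)

theorem cyclicNormalSeries_closure_of_subset_center {S : Set G} (hS : S.Finite)
    (hSZ : S ⊆ center G) : CyclicNormalSeries ⊥ (closure S) := by
  induction S, hS using Set.Finite.induction_on with
  | empty => rw [Subgroup.closure_empty]; exact .refl normal_bot
  | @insert a t _ _ ih =>
    rw [Set.insert_subset_iff] at hSZ
    refine (ih hSZ.2).snoc (normal_of_le_center ((closure_le _).2 (Set.insert_subset_iff.2 hSZ)))
      (closure_mono (Set.subset_insert a t)) ⟨a, subset_closure (Set.mem_insert a t), ?_⟩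
    rw [Set.insert_eq, Subgroup.closure_union, ← zpowers_eq_closure, sup_comm]

namespace Subgroup

variable (P : Subgroup G)

theorem mk_conj_eq_of_mem {a w : G} (ha : a ∈ P) (hw : w ∈ P) :
    ((a * w * a⁻¹ : G) : G ⧸ ⁅P, P⁆) = w := by
  rw [QuotientGroup.eq]
  convert commutator_mem_commutator ha (inv_mem hw) using 1
  group

/-- `a ↦ ⁅x, a⁆` modulo `⁅P, P⁆`: a homomorphism because `⁅x, a * b⁆ = ⁅x, a⁆ * (a * ⁅x, b⁆ * a⁻¹)`
and conjugation by `a ∈ P` fixes `⁅x, b⁆ ∈ P` modulo `⁅P, P⁆`. -/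
def commutatorModHom [hP : P.Normal] (x : G) : P →* G ⧸ ⁅P, P⁆ :=
  MonoidHom.mk' (fun a => ((⁅x, (a : G)⁆ : G) : G ⧸ ⁅P, P⁆)) fun a b => by
    have : ⁅x, (a : G) * b⁆ = ⁅x, (a : G)⁆ * ((a : G) * ⁅x, (b : G)⁆ * (a : G)⁻¹) := by
      rw [commutatorElement_mul_right_eq_mul_conj]; group
    rw [coe_mul, this, QuotientGroup.mk_mul,
      mk_conj_eq_of_mem P a.2 (hP.commutatorElement_mem x b.2)]

theorem commutatorModHom_apply [P.Normal] (x : G) (a : P) :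
    commutatorModHom P x a = ((⁅x, (a : G)⁆ : G) : G ⧸ ⁅P, P⁆) := rfl

theorem mk_commutator_zpow_mem_range [hP : P.Normal] (x : G) (k : ℤ) {b : G} (hb : b ∈ P) :
    ((⁅x ^ k, b⁆ : G) : G ⧸ ⁅P, P⁆) ∈ (commutatorModHom P x).range := by
  set R := (commutatorModHom P x).range
  have hR : ∀ c ∈ P, ((⁅x, c⁆ : G) : G ⧸ ⁅P, P⁆) ∈ R := fun c hc => ⟨⟨c, hc⟩, rfl⟩
  induction k using Int.induction_on with
  | zero => simp [R.one_mem]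
  | succ k ih =>
    have : ⁅x ^ ((k : ℤ) + 1), b⁆ = ⁅x, x ^ (k : ℤ) * b * (x ^ (k : ℤ))⁻¹⁆ * ⁅x ^ (k : ℤ), b⁆ := by
      simp only [commutatorElement_def]; group
    rw [this, QuotientGroup.mk_mul]
    exact R.mul_mem (hR _ (hP.conj_mem b hb _)) ih
  | pred k ih =>
    have : ⁅x ^ (-(k : ℤ) - 1), b⁆ =
        ⁅x, x ^ (-(k : ℤ) - 1) * b * (x ^ (-(k : ℤ) - 1))⁻¹⁆⁻¹ * ⁅x ^ (-(k : ℤ)), b⁆ := by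
      simp only [commutatorElement_def]; group
    rw [this, QuotientGroup.mk_mul, QuotientGroup.mk_inv]
    exact R.mul_mem (R.inv_mem (hR _ (hP.conj_mem b hb _))) ih

theorem commutator_le_comap_range_commutatorModHom [hP : P.Normal] (x : G) {Q : Subgroup G}
    (hQ : Q ≤ P ⊔ zpowers x) :
    ⁅Q, Q⁆ ≤ (commutatorModHom P x).range.comap (QuotientGroup.mk' ⁅P, P⁆) := by
  rw [commutator_le]
  intro y hy z hz
  obtain ⟨a, ha, _, ⟨k, rfl⟩, rfl⟩ := mem_sup_of_normal_left.1 (hQ hy)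
  obtain ⟨b, hb, _, ⟨l, rfl⟩, rfl⟩ := mem_sup_of_normal_left.1 (hQ hz)
  have hab : ((⁅a, b⁆ : G) : G ⧸ ⁅P, P⁆) = 1 :=
    (QuotientGroup.eq_one_iff _).2 (commutator_mem_commutator ha hb)
  have : ⁅a * x ^ k, b * x ^ l⁆ =
      a * ⁅x ^ k, b⁆ * a⁻¹ * ⁅a, b⁆ * (b * ⁅x ^ l, a⁆⁻¹ * b⁻¹) := by
    simp only [commutatorElement_def]; group
  rw [mem_comap, QuotientGroup.mk'_apply, this, QuotientGroup.mk_mul, QuotientGroup.mk_mul,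
    mk_conj_eq_of_mem P ha (hP.commutatorElement_mem _ hb), hab, mul_one,
    mk_conj_eq_of_mem P hb (inv_mem (hP.commutatorElement_mem _ ha)), QuotientGroup.mk_inv]
  exact mul_mem (mk_commutator_zpow_mem_range P x k hb)
    (inv_mem (mk_commutator_zpow_mem_range P x l ha))

end Subgroup

theorem fg_ker_inf_commutator_comap {φ : G →* H} (hφ : Function.Surjective φ)
    (hker : φ.ker ≤ center G) {M : Subgroup H} (hM : CyclicNormalSeries ⊥ M) :
    (φ.ker ⊓ ⁅M.comap φ, M.comap φ⁆).FG := by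
  induction hM with
  | refl _ =>
    rw [MonoidHom.comap_bot, (commutator_eq_bot_iff_le_centralizer).2
      (hker.trans (center_le_centralizer _)), inf_bot_eq]
    exact FG.bot
  | @snoc B C hB _ hBC hcyc ih =>
    obtain ⟨g, -, hCg⟩ := hcyc
    obtain ⟨x, rfl⟩ := hφ g
    have := hB.normal
    set P := B.comap φ
    have hQ : C.comap φ ≤ P ⊔ zpowers x :=
      calc C.comap φ ≤ (B ⊔ zpowers (φ x)).comap φ := comap_mono hCg
        _ = P ⊔ (zpowers x ⊔ φ.ker) := by
          rw [← comap_sup_eq φ _ _ hφ, ← MonoidHom.map_zpowers, comap_map_eq]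
        _ ≤ P ⊔ zpowers x :=
          sup_le le_sup_left (sup_le le_sup_right ((comap_mono bot_le).trans le_sup_left))
    let π := φ.subgroupComap B
    have hπ : π.ker ≤ (commutatorModHom P x).ker := by
      intro a ha
      have hxa : Commute x a := mem_center_iff.1 (hker (congrArg Subtype.val ha)) x
      simp [commutatorModHom_apply, hxa.commutator_eq]
    let f := π.liftOfSurjective (φ.subgroupComap_surjective_of_surjective B hφ) ⟨_, hπ⟩
    have hrange : (commutatorModHom P x).range ≤ f.range := by
      rintro _ ⟨a, rfl⟩
      exact ⟨π a, by simp [f]⟩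
    refine fg_of_fg_map_of_fg_inf_ker (QuotientGroup.mk' ⁅P, P⁆) ?_ ?_
    · refine FG.of_le_range hB.fg (le_trans ?_ hrange)
      exact map_le_iff_le_comap.2
        (inf_le_right.trans (commutator_le_comap_range_commutatorModHom P x hQ))
    · rw [QuotientGroup.ker_mk', inf_assoc,
        inf_eq_right.2 (commutator_mono (comap_mono hBC) (comap_mono hBC))]
      exact ih

end

/-- If `φ : G → H` is a surjective group homomorphism whose kernel is contained in the center
of `G` (i.e. `G` is a central extension of `H`) and `H` is super-solvable, then the commutator
subgroup `[G, G]` is super-solvable. -/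
theorem commutator_supersolvable_of_central_extension
    {G H : Type*} [Group G] [Group H] (φ : G →* H)
    (hsurj : Function.Surjective φ) (hker : φ.ker ≤ Subgroup.center G)
    (hH : IsSupersolvable H) :
    IsSupersolvable ↥(commutator G) := by
  rw [isSupersolvable_iff_cyclicNormalSeries] at hH ⊢
  have hfg : (φ.ker ⊓ commutator G).FG := by
    simpa [commutator_def] using fg_ker_inf_commutator_comap hsurj hker hH
  obtain ⟨S, hS, hSfin⟩ := (Subgroup.fg_iff _).1 hfg
  have hcentral : CyclicNormalSeries ⊥ (φ.ker ⊓ commutator G) :=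
    hS ▸ cyclicNormalSeries_closure_of_subset_center hSfin
      (Subgroup.subset_closure.trans (hS ▸ inf_le_left.trans hker))
  let ψ := φ.comp (commutator G).subtype
  have hbottom : CyclicNormalSeries ⊥ ψ.ker := by
    simpa [ψ, ← MonoidHom.comap_ker] using hcentral.comap (commutator G).subtype
  have htop : CyclicNormalSeries ψ.ker ⊤ := by
    simpa using hH.comap ψ
  exact hbottom.trans htop
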